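/- For the poset Δ⁺ of positive roots of type A_n (n ≥ 2), the reverse operator interchanges the two alternating sets of simple roots: 𝔛({α_i : i odd, 1 ≤ i ≤ n}) = {α_i : i even, 1 ≤ i ≤ n} and 𝔛({α_i : i even, 1 ≤ i ≤ n}) = {α_i : i odd, 1 ≤ i ≤ n}; in particular these two antichains form an 𝔛-orbit of cardinality 2. -/

import Mathlib

open Finset

/-- The root order on pairs: `(i,j) ≼ (i',j')` iff `i' ≤ i` and `j ≤ j'`. -/
def rle (p q : ℕ × ℕ) : Prop := q.1 ≤ p.1 ∧ p.2 ≤ q.2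

instance : DecidableRel rle := fun p q =>
  inferInstanceAs (Decidable (q.1 ≤ p.1 ∧ p.2 ≤ q.2))

/-- The positive roots of type `A_n`, modelled as pairs `(i,j)` with `1 ≤ i ≤ j ≤ n`. -/
def roots (n : ℕ) : Finset (ℕ × ℕ) :=
  ((Finset.Icc 1 n) ×ˢ (Finset.Icc 1 n)).filter (fun p => p.1 ≤ p.2)

/-- `Γ` is an antichain in `Δ⁺(A_n)`: a set of pairwise incomparable positive roots. -/
def IsAC (n : ℕ) (Γ : Finset (ℕ × ℕ)) : Prop :=
  Γ ⊆ roots n ∧ ∀ p ∈ Γ, ∀ q ∈ Γ, rle p q → p = q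

/-- The upper ideal `I(Γ) = {x ∈ Δ⁺ : ∃ γ ∈ Γ, γ ≼ x}` generated by `Γ`. -/
def upIdeal (n : ℕ) (Γ : Finset (ℕ × ℕ)) : Finset (ℕ × ℕ) :=
  (roots n).filter (fun x => ∃ γ ∈ Γ, rle γ x)

/-- The set of maximal elements of `S` with respect to the root order. -/
def maxOf (S : Finset (ℕ × ℕ)) : Finset (ℕ × ℕ) :=
  S.filter (fun x => ∀ y ∈ S, rle x y → y = x)

/-- The set of minimal elements of `S` with respect to the root order. -/
def minOf (S : Finset (ℕ × ℕ)) : Finset (ℕ × ℕ) :=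
  S.filter (fun x => ∀ y ∈ S, rle y x → y = x)

/-- The reverse operator `𝔛`, sending an antichain `Γ` to the set of maximal
elements of `Δ⁺ \ I(Γ)`. -/
def Xrev (n : ℕ) (Γ : Finset (ℕ × ℕ)) : Finset (ℕ × ℕ) :=
  maxOf (roots n \ upIdeal n Γ)

/-- `r_Γ(γ) = #(I(Γ) \ {γ})_min − #I(Γ)_min + 1`. -/
def rGam (n : ℕ) (Γ : Finset (ℕ × ℕ)) (γ : ℕ × ℕ) : ℤ :=
  ((minOf (upIdeal n Γ \ {γ})).card : ℤ) - ((minOf (upIdeal n Γ)).card : ℤ) + 1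

/-- The OY-number `𝒴(Γ) = Σ_{γ ∈ Γ} r_Γ(γ)`; in particular `𝒴(∅) = 0`. -/
def OY (n : ℕ) (Γ : Finset (ℕ × ℕ)) : ℤ := ∑ γ ∈ Γ, rGam n Γ γ

lemma mem_roots {n : ℕ} {p : ℕ × ℕ} :
    p ∈ roots n ↔ 1 ≤ p.1 ∧ p.1 ≤ p.2 ∧ p.2 ≤ n := by
  simp only [roots, mem_filter, mem_product, mem_Icc]
  omega

lemma maxOf_eq_self {S : Finset (ℕ × ℕ)} (hS : ∀ x ∈ S, ∀ y ∈ S, rle x y → y = x) :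
    maxOf S = S :=
  filter_true_of_mem hS

def simpleRootsWith (n : ℕ) (P : ℕ → Prop) [DecidablePred P] : Finset (ℕ × ℕ) :=
  (roots n).filter (fun p => p.1 = p.2 ∧ P p.1)

section SimpleRoots

variable {n : ℕ} {P Q : ℕ → Prop} [DecidablePred P] [DecidablePred Q]

lemma mem_simpleRootsWith {x : ℕ × ℕ} :
    x ∈ simpleRootsWith n P ↔ x ∈ roots n ∧ x.1 = x.2 ∧ P x.1 :=
  mem_filter

lemma eq_of_rle_of_mem_simpleRootsWith {x y : ℕ × ℕ} (hx : x ∈ simpleRootsWith n P)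
    (hy : y ∈ simpleRootsWith n Q) (hxy : rle x y) : y = x := by
  obtain ⟨-, hx, -⟩ := mem_simpleRootsWith.1 hx
  obtain ⟨-, hy, -⟩ := mem_simpleRootsWith.1 hy
  obtain ⟨h₁, h₂⟩ := hxy
  exact Prod.ext (by omega) (by omega)

lemma mem_upIdeal_simpleRootsWith {x : ℕ × ℕ} :
    x ∈ upIdeal n (simpleRootsWith n P) ↔ x ∈ roots n ∧ ∃ k, P k ∧ x.1 ≤ k ∧ k ≤ x.2 := by
  rw [upIdeal, mem_filter, and_congr_right_iff]
  intro hx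
  rw [mem_roots] at hx
  constructor
  · rintro ⟨γ, hγ, h₁, h₂⟩
    obtain ⟨-, hγ, hP⟩ := mem_simpleRootsWith.1 hγ
    exact ⟨γ.1, hP, h₁, hγ ▸ h₂⟩
  · rintro ⟨k, hk, h₁, h₂⟩
    exact ⟨(k, k), mem_simpleRootsWith.2 ⟨mem_roots.2 ⟨by omega, le_rfl, by omega⟩, rfl, hk⟩,
      h₁, h₂⟩

/-- Since `P` holds at one of any two consecutive indices, a root `(i, j)` whose interval
`[i, j]` avoids `P` is simple. -/
lemma roots_sdiff_upIdeal_simpleRootsWith (hPQ : ∀ k, Q k ↔ ¬ P k)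
    (hstep : ∀ k, P k ∨ P (k + 1)) :
    roots n \ upIdeal n (simpleRootsWith n P) = simpleRootsWith n Q := by
  ext x
  rw [mem_sdiff, mem_upIdeal_simpleRootsWith, mem_simpleRootsWith, hPQ]
  constructor
  · rintro ⟨hx, hnot⟩
    replace hnot := not_and.1 hnot hx
    push Not at hnot
    have hle := (mem_roots.1 hx).2.1
    have hP₁ : ¬ P x.1 := fun h => by have := hnot x.1 h; omega
    have hdiag : x.1 = x.2 := by
      rcases hstep x.1 with h | h
      · exact absurd h hP₁
      · have := hnot (x.1 + 1) h
        omega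
    exact ⟨hx, hdiag, hP₁⟩
  · rintro ⟨hx, hdiag, hP₁⟩
    refine ⟨hx, ?_⟩
    rintro ⟨-, k, hk, h₁, h₂⟩
    apply hP₁
    rwa [show x.1 = k by omega]

lemma Xrev_simpleRootsWith (hPQ : ∀ k, Q k ↔ ¬ P k) (hstep : ∀ k, P k ∨ P (k + 1)) :
    Xrev n (simpleRootsWith n P) = simpleRootsWith n Q := by
  rw [Xrev, roots_sdiff_upIdeal_simpleRootsWith hPQ hstep]
  exact maxOf_eq_self fun _ hx _ hy => eq_of_rle_of_mem_simpleRootsWith hx hy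

end SimpleRoots

/-- For `Δ⁺(A_n)` with `n ≥ 2`, the reverse operator interchanges the antichain
of simple roots with odd indices and the antichain of simple roots with even
indices; in particular these two antichains form an `𝔛`-orbit of cardinality 2. -/
theorem stmt9 (n : ℕ) (hn : 2 ≤ n) :
    Xrev n ((roots n).filter (fun p => p.1 = p.2 ∧ Odd p.1))
      = (roots n).filter (fun p => p.1 = p.2 ∧ Even p.1) ∧
    Xrev n ((roots n).filter (fun p => p.1 = p.2 ∧ Even p.1))
      = (roots n).filter (fun p => p.1 = p.2 ∧ Odd p.1) ∧
    (roots n).filter (fun p => p.1 = p.2 ∧ Odd p.1)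
      ≠ (roots n).filter (fun p => p.1 = p.2 ∧ Even p.1) := by
  have hodd : Xrev n (simpleRootsWith n Odd) = simpleRootsWith n Even :=
    Xrev_simpleRootsWith (fun _ => Nat.not_odd_iff_even.symm)
      fun k => (Nat.even_or_odd k).symm.imp id Even.add_one
  have heven : Xrev n (simpleRootsWith n Even) = simpleRootsWith n Odd :=
    Xrev_simpleRootsWith (fun _ => Nat.not_even_iff_odd.symm)
      fun k => (Nat.even_or_odd k).imp id Odd.add_one
  refine ⟨hodd, heven, fun h => ?_⟩
  have hα₁ : ((1, 1) : ℕ × ℕ) ∈ simpleRootsWith n Odd :=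
    mem_simpleRootsWith.2 ⟨mem_roots.2 ⟨le_rfl, le_rfl, by omega⟩, rfl, odd_one⟩
  rw [show simpleRootsWith n Odd = simpleRootsWith n Even from h, mem_simpleRootsWith] at hα₁
  exact Nat.not_even_one hα₁.2.2
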